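/- For every α ∈ (0,∞), β ∈ (0,∞) and c̃ ∈ (0,∞), the derivative of φ_{α,β,c̃} satisfies φ'_{α,β,c̃}(1) = 0, φ'_{α,β,c̃}(t) → c̃·β as t → +∞, and φ'_{α,β,c̃}(t) → −c̃·β as t → −∞. -/

import Mathlib

/-- The generator φ_{α,β,c̃} from Broniatowski & Stummer. -/
noncomputable def phi (α β c t : ℝ) : ℝ :=
  if t = 1 then 0
  else c * α * (Real.sqrt (1 + β ^ 2 * ((1 - t) / α) ^ 2) - 1 +
    Real.log (2 * (Real.sqrt (1 + β ^ 2 * ((1 - t) / α) ^ 2) - 1) /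
      (β ^ 2 * ((1 - t) / α) ^ 2)))

lemma phi_eq (α β c : ℝ) (hα : 0 < α) (hβ : 0 < β) :
    phi α β c = fun t => c * α * (Real.sqrt (1 + β ^ 2 * ((1 - t) / α) ^ 2) - 1 +
      (Real.log 2 - Real.log (Real.sqrt (1 + β ^ 2 * ((1 - t) / α) ^ 2) + 1))) := by
  funext t
  rcases eq_or_ne t 1 with ht | ht
  · subst ht
    simp [phi]
    right; norm_num
  · have hu0 : (1 - t) / α ≠ 0 := by
      refine div_ne_zero ?_ hα.ne'
      intro h
      exact ht (by linarith [sub_eq_zero.mp h])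
    set u := (1 - t) / α with hu
    have hpos : 0 < β ^ 2 * u ^ 2 := by positivity
    have hg : (0:ℝ) ≤ 1 + β ^ 2 * u ^ 2 := by positivity
    set s := Real.sqrt (1 + β ^ 2 * u ^ 2) with hs
    have hs2 : s ^ 2 = 1 + β ^ 2 * u ^ 2 := Real.sq_sqrt hg
    have hsnn : 0 ≤ s := Real.sqrt_nonneg _
    have hs1 : 1 < s := by nlinarith
    have hne1 : s - 1 ≠ 0 := by linarith
    have hne2 : s + 1 ≠ 0 := by linarith
    have key : 2 * (s - 1) / (β ^ 2 * u ^ 2) = 2 / (s + 1) := by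
      rw [show β ^ 2 * u ^ 2 = (s - 1) * (s + 1) by nlinarith]
      field_simp
    simp only [phi, if_neg ht]
    rw [key, Real.log_div (by norm_num) (by positivity)]

lemma phi_hasDeriv (α β c : ℝ) (hα : 0 < α) (hβ : 0 < β) (t : ℝ) :
    HasDerivAt (phi α β c)
      (c * β ^ 2 * (t - 1) / (α * (Real.sqrt (1 + β ^ 2 * ((1 - t) / α) ^ 2) + 1))) t := by
  rw [phi_eq α β c hα hβ]
  have hgpos : (0:ℝ) < 1 + β ^ 2 * ((1 - t) / α) ^ 2 := by positivity
  set s := Real.sqrt (1 + β ^ 2 * ((1 - t) / α) ^ 2) with hs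
  have hs2 : s ^ 2 = 1 + β ^ 2 * ((1 - t) / α) ^ 2 := Real.sq_sqrt hgpos.le
  have hsnn : 0 ≤ s := Real.sqrt_nonneg _
  have hs1 : 1 ≤ s := by nlinarith
  have hspos : 0 < s := by linarith
  have hinner : HasDerivAt (fun x : ℝ => 1 + β ^ 2 * ((1 - x) / α) ^ 2)
      (β ^ 2 * (2 * ((1 - t) / α) * (-1 / α))) t := by
    have h1 : HasDerivAt (fun x : ℝ => (1 - x) / α) (-1 / α) t := by
      simpa using ((hasDerivAt_id t).const_sub 1).div_const α
    simpa using ((h1.pow 2).const_mul (β ^ 2)).const_add 1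
  have hsqrt : HasDerivAt (fun x : ℝ => Real.sqrt (1 + β ^ 2 * ((1 - x) / α) ^ 2))
      (β ^ 2 * (2 * ((1 - t) / α) * (-1 / α)) / (2 * s)) t := hinner.sqrt hgpos.ne'
  have hlog : HasDerivAt (fun x : ℝ =>
      Real.log (Real.sqrt (1 + β ^ 2 * ((1 - x) / α) ^ 2) + 1))
      ((β ^ 2 * (2 * ((1 - t) / α) * (-1 / α)) / (2 * s)) / (s + 1)) t := by
    have := ((hsqrt.add_const 1).log (by positivity : s + 1 ≠ 0))
    simpa using this
  have htotal := (((hsqrt.sub_const 1).add ((hasDerivAt_const t (Real.log 2)).sub hlog)).const_mul (c * α))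
  refine htotal.congr_deriv ?_
  have h1 : s + 1 ≠ 0 := by positivity
  field_simp
  ring

set_option maxHeartbeats 1000000 in
theorem stmt_15 (α β c : ℝ) (hα : 0 < α) (hβ : 0 < β) (hc : 0 < c) :
    deriv (phi α β c) 1 = 0 ∧
    Filter.Tendsto (deriv (phi α β c)) Filter.atTop (nhds (c * β)) ∧
    Filter.Tendsto (deriv (phi α β c)) Filter.atBot (nhds (-(c * β))) := by
  have hder : ∀ t, deriv (phi α β c) t =
      c * β ^ 2 * (t - 1) / (α * (Real.sqrt (1 + β ^ 2 * ((1 - t) / α) ^ 2) + 1)) :=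
    fun t => (phi_hasDeriv α β c hα hβ t).deriv
  set F : ℝ → ℝ := fun x => c * β ^ 2 / (α * (Real.sqrt (x ^ 2 + (β / α) ^ 2) + x)) with hF
  have hF0 : F 0 = c * β := by
    simp only [hF]
    rw [show (0:ℝ) ^ 2 + (β / α) ^ 2 = (β / α) ^ 2 by ring,
      Real.sqrt_sq (by positivity)]
    field_simp
    ring
  have hFcont : ContinuousAt F 0 := by
    have hden : α * (Real.sqrt ((0:ℝ) ^ 2 + (β / α) ^ 2) + 0) ≠ 0 := by
      rw [show (0:ℝ) ^ 2 + (β / α) ^ 2 = (β / α) ^ 2 by ring,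
        Real.sqrt_sq (by positivity)]
      positivity
    exact (continuousAt_const.div
      ((continuous_const.mul ((((continuous_pow 2).add continuous_const).sqrt).add
        continuous_id)).continuousAt) hden)
  -- key algebraic identity: for t ≠ 1 with r = t - 1 > 0 resp. 1 - t > 0
  have hsqrt_scale : ∀ t r : ℝ, 0 < r → (1 - t) ^ 2 = r ^ 2 →
      Real.sqrt ((1 / r) ^ 2 + (β / α) ^ 2) =
        Real.sqrt (1 + β ^ 2 * ((1 - t) / α) ^ 2) / r := by
    intro t r hr hsq
    rw [eq_div_iff hr.ne', ← Real.sqrt_sq hr.le, ← Real.sqrt_mul (by positivity)]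
    congr 1
    have hr0 : r ≠ 0 := hr.ne'
    have h2 : ((1 - t) / α) ^ 2 = r ^ 2 / α ^ 2 := by rw [div_pow, hsq]
    rw [h2]
    field_simp
    rw [Real.sq_sqrt (by positivity)]
  refine ⟨?_, ?_, ?_⟩
  · rw [hder 1]; simp
  · -- atTop
    have hsub : Filter.Tendsto (fun t : ℝ => t - 1) Filter.atTop Filter.atTop := by
      simp only [sub_eq_add_neg]
      exact Filter.tendsto_atTop_add_const_right _ _ Filter.tendsto_id
    have h1 : Filter.Tendsto (fun t : ℝ => 1 / (t - 1)) Filter.atTop (nhds 0) := by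
      simp only [one_div]
      exact tendsto_inv_atTop_zero.comp hsub
    have heq : ∀ᶠ t in Filter.atTop, F (1 / (t - 1)) = deriv (phi α β c) t := by
      filter_upwards [Filter.eventually_gt_atTop (1:ℝ)] with t ht
      have hr : 0 < t - 1 := by linarith
      rw [hder t, hF]
      simp only
      rw [hsqrt_scale t (t - 1) hr (by ring)]
      have hs : 0 < Real.sqrt (1 + β ^ 2 * ((1 - t) / α) ^ 2) := by
        apply Real.sqrt_pos.mpr; positivity
      rw [div_eq_div_iff (by positivity) (by positivity)]
      field_simp
    have := (hFcont.tendsto.comp h1).congr' heq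
    rwa [hF0] at this
  · -- atBot
    have h1 : Filter.Tendsto (fun t : ℝ => 1 / (1 - t)) Filter.atBot (nhds 0) := by
      have hsub : Filter.Tendsto (fun t : ℝ => 1 - t) Filter.atBot Filter.atTop := by
        simp only [sub_eq_add_neg]
        exact Filter.tendsto_atTop_add_const_left _ _ Filter.tendsto_neg_atBot_atTop
      simp only [one_div]
      exact tendsto_inv_atTop_zero.comp hsub
    have heq : ∀ᶠ t in Filter.atBot, -F (1 / (1 - t)) = deriv (phi α β c) t := by
      filter_upwards [Filter.eventually_lt_atBot (1:ℝ)] with t ht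
      have hr : 0 < 1 - t := by linarith
      rw [hder t, hF]
      simp only
      rw [hsqrt_scale t (1 - t) hr (by ring)]
      have hs : 0 < Real.sqrt (1 + β ^ 2 * ((1 - t) / α) ^ 2) := by
        apply Real.sqrt_pos.mpr; positivity
      rw [neg_div', div_eq_div_iff (by positivity) (by positivity)]
      field_simp
      ring
    have := ((hFcont.tendsto.comp h1).neg).congr' heq
    rwa [hF0] at this
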